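/- For $j = 1, \dots, n$, let $K_1, \dots, K_n \subseteq \mathbb{T}$ be pairwise disjoint measurable sets of positive Lebesgue measure, each invariant under $t \mapsto t^{-1}$. Then the operators $M(\chi_{K_1}), \dots, M(\chi_{K_n})$ on $H^2(\mathbb{T})$ are nonzero idempotents with $M(\chi_{K_i})M(\chi_{K_j}) = 0$ for $i \ne j$, and hence $\dim \operatorname{im} M(\chi_{K_1 \cup \cdots \cup K_n}) \ge n$. Consequently, if $K \subseteq \mathbb{T}$ is even and has positive measure, then $\operatorname{im} M(\chi_K)$ is infinite dimensional. -/

import Mathlib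

open MeasureTheory Complex Real
noncomputable section
namespace TH

abbrev Tp : ℝ := 2 * Real.pi
instance : Fact (0 < Tp) := ⟨by positivity⟩
abbrev 𝕋 := AddCircle Tp
abbrev μ : Measure 𝕋 := AddCircle.haarAddCircle
abbrev L2 := Lp ℂ 2 μ

open scoped Classical in
/-- Multiplication operator by `φ` (defined to be `0` if `φ` is not essentially bounded). -/
def Lmul (φ : 𝕋 → ℂ) : L2 →L[ℂ] L2 :=
  if hφ : MemLp φ ⊤ μ then
    LinearMap.mkContinuous
      { toFun := fun f => ((Lp.memLp f).smul (r := 2) hφ).toLp (φ • ⇑f)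
        map_add' := fun f g => by
          rw [← MemLp.toLp_add]
          exact MemLp.toLp_congr _ _ (by
            filter_upwards [Lp.coeFn_add f g] with x hx
            simp only [Pi.smul_apply, smul_eq_mul, Pi.mul_apply, hx, Pi.add_apply, mul_add])
        map_smul' := fun c f => by
          rw [RingHom.id_apply, ← MemLp.toLp_const_smul]
          exact MemLp.toLp_congr ((Lp.memLp (c • f)).smul (r := 2) hφ)
            (((Lp.memLp f).smul (r := 2) hφ).const_smul c) (by
            filter_upwards [Lp.coeFn_smul c f] with x hx
            simp only [Pi.smul_apply, smul_eq_mul, Pi.mul_apply, hx]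
            ring) }
      (eLpNorm φ ⊤ μ).toReal
      (fun f => by
        simp only [LinearMap.coe_mk, AddHom.coe_mk]
        rw [Lp.norm_toLp, Lp.norm_def, ← ENNReal.toReal_mul]
        refine ENNReal.toReal_mono ?_ ?_
        · exact ENNReal.mul_ne_top hφ.eLpNorm_ne_top (Lp.eLpNorm_ne_top f)
        · exact eLpNorm_smul_le_eLpNorm_top_mul_eLpNorm 2 (Lp.aestronglyMeasurable f) φ)
  else 0

/-- Composition with `x ↦ -x` on `L²`. -/
def Cneg : L2 → L2 :=
  Lp.compMeasurePreserving (fun x : 𝕋 => -x) (Measure.measurePreserving_neg μ)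

/-- The flip operator `J : f(t) ↦ t⁻¹ f(t⁻¹)`. -/
def Jop : L2 →L[ℂ] L2 :=
  { toFun := fun f => Lmul (fun x => fourier (-1) x) (Cneg f)
    map_add' := fun f g => by
      show Lmul _ (Cneg (f + g)) = Lmul _ (Cneg f) + Lmul _ (Cneg g)
      unfold Cneg
      rw [map_add, map_add]
    map_smul' := fun c f => by
      show Lmul _ (Cneg (c • f)) = c • Lmul _ (Cneg f)
      rw [← map_smul (Lmul fun x => fourier (-1) x)]
      congr 1
      apply Lp.ext
      unfold Cneg
      filter_upwards [Lp.coeFn_compMeasurePreserving (c • f) (Measure.measurePreserving_neg μ),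
        Lp.coeFn_smul c (Lp.compMeasurePreserving (fun x : 𝕋 => -x)
          (Measure.measurePreserving_neg μ) f),
        (Measure.measurePreserving_neg μ).quasiMeasurePreserving.ae_eq_comp (Lp.coeFn_smul c f),
        Lp.coeFn_compMeasurePreserving f (Measure.measurePreserving_neg μ)]
        with x hx1 hx2 hx3 hx4
      refine hx1.trans (hx3.trans ?_)
      have h5 : ((c • (↑↑f : 𝕋 → ℂ)) ∘ Neg.neg) x = c • (↑↑f ∘ Neg.neg) x := rfl
      rw [h5, ← hx4]
      exact hx2.symm
    cont := by
      exact (Lmul _).continuous.comp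
        (Lp.isometry_compMeasurePreserving (E := ℂ) (p := 2)
          (Measure.measurePreserving_neg μ)).continuous }

/-- The Hardy space `H²(𝕋)`: closed span of `{t^n : n ≥ 0}`. -/
def Hardy : Submodule ℂ L2 :=
  (Submodule.span ℂ (Set.range fun n : ℕ => (fourierLp 2 (n : ℤ) : L2))).topologicalClosure

instance : CompleteSpace Hardy :=
  (Submodule.isClosed_topologicalClosure _).completeSpace_coe

/-- The Riesz projection, as an operator on `L²(𝕋)`. -/
def Pproj : L2 →L[ℂ] L2 := Hardy.subtypeL ∘L Hardy.orthogonalProjectionOnto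

/-- The Toeplitz operator `T(φ) : f ↦ P(φ f)` on `H²`. -/
def Top (φ : 𝕋 → ℂ) : Hardy →L[ℂ] Hardy :=
  Hardy.orthogonalProjectionOnto ∘L Lmul φ ∘L Hardy.subtypeL

/-- The Hankel operator `H(φ) : f ↦ P(φ · Jf)` on `H²`. -/
def Hop (φ : 𝕋 → ℂ) : Hardy →L[ℂ] Hardy :=
  Hardy.orthogonalProjectionOnto ∘L Lmul φ ∘L Jop ∘L Hardy.subtypeL

/-- The Toeplitz + Hankel operator `M(φ) = T(φ) + H(φ)`. -/
def Mop (φ : 𝕋 → ℂ) : Hardy →L[ℂ] Hardy := Top φ + Hop φ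

/-- The flip `φ̃(t) = φ(t⁻¹)` of a function on the circle. -/
def flip (φ : 𝕋 → ℂ) : 𝕋 → ℂ := fun x => φ (-x)


/-!
For even `β` the function `g = β (x + J x)` is `J`-invariant, and since `J` swaps `H²` and its
orthogonal complement this forces `P g + J (P g) = g`; this is the multiplicativity
`M(α β) = M(α) M(β)`. Hence the `M(χ_{K_i})` are orthogonal idempotents, and `M(χ_S)` fixes their
ranges whenever every `K_i ⊆ S`, so vectors `M(χ_{K_i}) x_i ≠ 0` are linearly independent in the
range of `M(χ_S)`. They are nonzero: `M(φ) 1 = 0` forces `φ̂(n) + φ̂(n+1) = 0` for `n ≥ 0`, so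
`|φ̂(n)|` is constant and, by Parseval, zero, while `χ̂_K(0) = μ K > 0`. Finally, cutting an even
set of positive measure with the even ball `{‖t‖ ≤ r}` at its median radius splits it into two
such sets, so it contains arbitrarily many disjoint ones.
-/

end TH

section Idempotents

variable {R M ι : Type*} [DivisionRing R] [AddCommGroup M] [Module R M] [Fintype ι]

theorem OrthogonalIdempotents.card_le_rank_range {e : ι → Module.End R M}
    (he : OrthogonalIdempotents e) (hne : ∀ i, e i ≠ 0) {f : Module.End R M}
    (hf : ∀ i, f * e i = e i) :
    (Fintype.card ι : Cardinal) ≤ Module.rank R (LinearMap.range f) := by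
  classical
  choose x hx using fun i => DFunLike.ne_iff.1 (hne i)
  have he_apply : ∀ i j, e i (e j (x j)) = if i = j then e i (x i) else 0 := by
    intro i j
    rw [← Module.End.mul_apply, he.mul_eq]
    split_ifs with hij
    · rw [hij]
    · rfl
  let y : ι → LinearMap.range f := fun i =>
    ⟨e i (x i), by rw [← hf i, Module.End.mul_apply]; exact LinearMap.mem_range_self f _⟩
  have hy : LinearIndependent R y := by
    refine LinearIndependent.of_comp (LinearMap.range f).subtype
      (linearIndependent_iff'.2 fun s g hg i hi => ?_)
    have hei := congrArg (e i) hg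
    simp only [Function.comp_apply, Submodule.subtype_apply, map_sum, map_smul, he_apply,
      smul_ite, smul_zero, Finset.sum_ite_eq, if_pos hi, map_zero, y] at hei
    exact (smul_eq_zero.1 hei).resolve_right (hx i)
  simpa using hy.cardinal_lift_le_rank

end Idempotents

section Splitting

open Metric Set

theorem exists_pairwise_disjoint_seq_of_forall_split {α : Type*} {p : Set α → Prop}
    (hsplit : ∀ s, p s → ∃ t u, t ⊆ s ∧ u ⊆ s ∧ Disjoint t u ∧ p t ∧ p u)
    {s : Set α} (hs : p s) :
    ∃ A : ℕ → Set α, (∀ k, p (A k) ∧ A k ⊆ s) ∧ Pairwise (Function.onFun Disjoint A) := by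
  choose! t u ht hu htu hpt hpu using hsplit
  let L : ℕ → Set α := fun k => u^[k] s
  have hL : ∀ k, p (L k) := by
    intro k
    induction k with
    | zero => exact hs
    | succ k ih => simpa only [L, Function.iterate_succ_apply'] using hpu _ ih
  have hLsucc : ∀ k, L (k + 1) = u (L k) := fun k => Function.iterate_succ_apply' u k s
  have hLanti : Antitone L :=
    antitone_nat_of_succ_le fun k => (hLsucc k).trans_subset (hu _ (hL k))
  refine ⟨fun k => t (L k), fun k => ⟨hpt _ (hL k), (ht _ (hL k)).trans (hLanti k.zero_le)⟩, ?_⟩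
  refine (pairwise_disjoint_on _).2 fun j k hjk => (htu _ (hL j)).mono_right ?_
  exact (ht _ (hL k)).trans ((hLanti hjk).trans_eq (hLsucc j))

namespace AddCircle

variable {T : ℝ} [hT : Fact (0 < T)]

theorem lipschitzWith_measureReal_inter_closedBall (K : Set (AddCircle T)) :
    LipschitzWith 2 fun r : ℝ => volume.real (K ∩ closedBall 0 r) := by
  refine LipschitzWith.of_le_add_mul 2 fun a b => ?_
  rcases le_total a b with hab | hba
  · exact (measureReal_mono (inter_subset_inter_right K (closedBall_subset_closedBall hab))).trans
      (le_add_of_nonneg_right (by positivity))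
  · have hsub : K ∩ closedBall 0 a ⊆ (K ∩ closedBall 0 b) ∪ (closedBall 0 a \ closedBall 0 b) :=
      fun x ⟨hxK, hxa⟩ => (em (x ∈ closedBall 0 b)).imp (⟨hxK, ·⟩) (⟨hxa, ·⟩)
    have hdiff : volume.real (closedBall (0 : AddCircle T) a \ closedBall 0 b) ≤ 2 * dist a b := by
      rw [measureReal_sdiff (closedBall_subset_closedBall hba) measurableSet_closedBall,
        Measure.real, Measure.real, volume_closedBall, volume_closedBall, ENNReal.toReal_ofReal',
        ENNReal.toReal_ofReal', Real.dist_eq, abs_of_nonneg (sub_nonneg.2 hba)]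
      simp only [max_def, min_def]
      split_ifs <;> linarith
    calc volume.real (K ∩ closedBall 0 a)
        ≤ volume.real ((K ∩ closedBall 0 b) ∪ (closedBall 0 a \ closedBall 0 b)) :=
          measureReal_mono hsub
      _ ≤ volume.real (K ∩ closedBall 0 b) + volume.real (closedBall 0 a \ closedBall 0 b) :=
          measureReal_union_le _ _
      _ ≤ _ := by rw [NNReal.coe_ofNat]; gcongr

theorem exists_volume_inter_closedBall_pos_and_sdiff_pos {K : Set (AddCircle T)}
    (hK : 0 < volume K) :
    ∃ r : ℝ, 0 < volume (K ∩ closedBall 0 r) ∧ 0 < volume (K \ closedBall 0 r) := by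
  set F := fun r : ℝ => volume.real (K ∩ closedBall 0 r)
  have hF₀ : F (-1) = 0 := by simp [F]
  have hFT : F T = volume.real K := by
    simp [F, closedBall_eq_univ_of_half_period_le T hT.out.ne' 0
      (by rw [abs_of_pos hT.out]; linarith [hT.out] : |T| / 2 ≤ T)]
  have hc : 0 < volume.real K := ENNReal.toReal_pos hK.ne' (measure_ne_top _ _)
  obtain ⟨r, -, hr⟩ := intermediate_value_Icc (by linarith [hT.out] : (-1 : ℝ) ≤ T)
    (lipschitzWith_measureReal_inter_closedBall K).continuous.continuousOn
    (⟨by rw [hF₀]; positivity, by rw [hFT]; exact half_le_self hc.le⟩ :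
      volume.real K / 2 ∈ Icc (F (-1)) (F T))
  have hsdiff := measureReal_inter_add_sdiff (μ := volume) (s := K)
    (measurableSet_closedBall (x := (0 : AddCircle T)) (ε := r))
  refine ⟨r, ?_, ?_⟩ <;> refine (ENNReal.toReal_pos_iff.1 ?_).1
  · change 0 < F r
    linarith
  · change 0 < volume.real _
    linarith

theorem haarAddCircle_pos_iff {s : Set (AddCircle T)} : 0 < haarAddCircle s ↔ 0 < volume s := by
  rw [volume_eq_smul_haarAddCircle, Measure.smul_apply, smul_eq_mul, ENNReal.mul_pos_iff,
    ENNReal.ofReal_pos]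
  exact ⟨fun h => ⟨hT.out, h⟩, And.right⟩

end AddCircle

end Splitting

namespace TH

section Multiplication

variable {φ ψ : 𝕋 → ℂ}

theorem coeFn_Lmul (hφ : MemLp φ ⊤ μ) (f : L2) : Lmul φ f =ᵐ[μ] φ * f := by
  rw [Lmul, dif_pos hφ]
  exact ((Lp.memLp f).smul (r := 2) hφ).coeFn_toLp

theorem Lmul_congr_ae (h : φ =ᵐ[μ] ψ) : Lmul φ = Lmul ψ := by
  by_cases hφ : MemLp φ ⊤ μ
  · ext f
    filter_upwards [coeFn_Lmul hφ f, coeFn_Lmul (hφ.ae_eq h) f, h] with x h₁ h₂ hx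
    simp only [h₁, h₂, Pi.mul_apply, hx]
  · have hψ : ¬ MemLp ψ ⊤ μ := fun hψ => hφ (hψ.ae_eq h.symm)
    rw [Lmul, dif_neg hφ, Lmul, dif_neg hψ]

theorem Lmul_zero : Lmul 0 = 0 := by
  ext f
  filter_upwards [coeFn_Lmul MemLp.zero f, Lp.coeFn_zero ℂ 2 μ] with x h₁ h₂
  rw [h₁, zero_apply, h₂, zero_mul]

theorem Lmul_mul (hφ : MemLp φ ⊤ μ) (hψ : MemLp ψ ⊤ μ) : Lmul (φ * ψ) = Lmul φ ∘L Lmul ψ := by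
  ext f
  filter_upwards [coeFn_Lmul (hψ.mul hφ) f, coeFn_Lmul hφ (Lmul ψ f), coeFn_Lmul hψ f]
    with x h₁ h₂ h₃
  simp only [ContinuousLinearMap.comp_apply, h₁, h₂, h₃, Pi.mul_apply, mul_assoc]

theorem memLp_top_indicator_one {K : Set 𝕋} (hK : MeasurableSet K) :
    MemLp (K.indicator (1 : 𝕋 → ℂ)) ⊤ μ :=
  (memLp_top_const 1).indicator hK

end Multiplication

section Flip

theorem memLp_top_fourier (n : ℤ) : MemLp (fourier n ·) ⊤ μ :=
  memLp_top_of_bound (map_continuous (fourier n)).aestronglyMeasurable 1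
    (.of_forall fun _ => (Circle.norm_coe _).le)

theorem fourier_apply_neg (n : ℤ) (x : 𝕋) : fourier n (-x) = fourier (-n) x := by
  rw [fourier_neg, ← fourier_neg', fourier_apply, smul_neg]

theorem ae_eq_comp_neg {f g : 𝕋 → ℂ} (h : f =ᵐ[μ] g) :
    (fun x => f (-x)) =ᵐ[μ] fun x => g (-x) :=
  (Measure.measurePreserving_neg μ).quasiMeasurePreserving.ae_eq_comp h

theorem coeFn_Jop (f : L2) : Jop f =ᵐ[μ] fun x => fourier (-1) x * f (-x) := by
  filter_upwards [coeFn_Lmul (memLp_top_fourier (-1)) (Cneg f),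
    Lp.coeFn_compMeasurePreserving f (Measure.measurePreserving_neg μ)] with x h₁ h₂
  exact h₁.trans (congrArg (fourier (-1) x * ·) h₂)

theorem Jop_Jop (f : L2) : Jop (Jop f) = f := by
  apply Lp.ext
  filter_upwards [coeFn_Jop (Jop f), ae_eq_comp_neg (coeFn_Jop f)] with x h₁ h₂
  rw [h₁, h₂, neg_neg, fourier_apply_neg, ← mul_assoc, ← fourier_add]
  simp

theorem Jop_Lmul {φ : 𝕋 → ℂ} (hφ : MemLp φ ⊤ μ) (f : L2) :
    Jop (Lmul φ f) = Lmul (flip φ) (Jop f) := by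
  have hflip : MemLp (flip φ) ⊤ μ := hφ.comp_measurePreserving (Measure.measurePreserving_neg μ)
  apply Lp.ext
  filter_upwards [coeFn_Jop (Lmul φ f), ae_eq_comp_neg (coeFn_Lmul hφ f),
    coeFn_Lmul hflip (Jop f), coeFn_Jop f] with x h₁ h₂ h₃ h₄
  simp only [h₁, h₂, h₃, h₄, Pi.mul_apply, flip]
  ring

end Flip

section HardySpace

theorem fourierLp_mem_Hardy (n : ℕ) : fourierLp 2 (n : ℤ) ∈ Hardy :=
  Submodule.le_topologicalClosure _ (Submodule.subset_span ⟨n, rfl⟩)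

theorem inner_fourierLp (m : ℤ) (f : L2) :
    inner ℂ (fourierLp 2 m : L2) f = fourierCoeff f m := by
  rw [← fourierBasis_repr, fourierBasis.repr_apply_apply, coe_fourierBasis]

theorem mem_Hardy_orthogonal_iff (f : L2) :
    f ∈ Hardyᗮ ↔ ∀ n : ℕ, fourierCoeff f n = 0 := by
  refine ⟨fun h n => ?_, fun h => ?_⟩
  · rw [← inner_fourierLp]
    exact Submodule.inner_right_of_mem_orthogonal (fourierLp_mem_Hardy n) h
  · rw [Hardy, Submodule.orthogonal_closure, Submodule.mem_orthogonal']
    have hspan : Submodule.span ℂ (Set.range fun n : ℕ => (fourierLp 2 (n : ℤ) : L2)) ≤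
        LinearMap.ker (innerₛₗ ℂ f) := by
      rw [Submodule.span_le]
      rintro _ ⟨n, rfl⟩
      rw [SetLike.mem_coe, LinearMap.mem_ker, coe_innerₛₗ_apply, inner_eq_zero_symm,
        inner_fourierLp]
      exact h n
    exact fun u hu => hspan hu

theorem mem_Hardy_iff (f : L2) :
    f ∈ Hardy ↔ ∀ m : ℤ, m < 0 → fourierCoeff f m = 0 := by
  refine ⟨fun hf m hm => ?_, fun h => ?_⟩
  · rw [← inner_fourierLp]
    refine Submodule.inner_left_of_mem_orthogonal hf ((mem_Hardy_orthogonal_iff _).2 fun n => ?_)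
    rw [← inner_fourierLp, orthonormal_iff_ite.1 orthonormal_fourier, if_neg (by omega)]
  · have hsum := fourierBasis.hasSum_repr f
    rw [coe_fourierBasis] at hsum
    refine (Submodule.isClosed_topologicalClosure _).mem_of_tendsto hsum
      (.of_forall fun s => Submodule.sum_mem _ fun i _ => ?_)
    obtain hi | hi := lt_or_ge i 0
    · simp [fourierBasis_repr, h i hi]
    · obtain ⟨k, rfl⟩ := Int.eq_ofNat_of_zero_le hi
      exact Submodule.smul_mem _ _ (fourierLp_mem_Hardy k)

theorem fourierCoeff_Jop (f : L2) (n : ℤ) :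
    fourierCoeff (Jop f) n = fourierCoeff f (-n - 1) := by
  have hJ : fourierCoeff (Jop f) n = ∫ x, fourier (-n - 1) x * f (-x) ∂μ := by
    refine integral_congr_ae ?_
    filter_upwards [coeFn_Jop f] with x hx
    rw [smul_eq_mul, hx, ← mul_assoc, ← fourier_add, ← sub_eq_add_neg]
  rw [hJ, fourierCoeff, ← (Measure.measurePreserving_neg μ).integral_comp
    (MeasurableEquiv.neg 𝕋).measurableEmbedding]
  simp only [neg_neg, fourier_apply_neg, smul_eq_mul]

theorem Jop_mem_Hardy_orthogonal {f : L2} (hf : f ∈ Hardy) : Jop f ∈ Hardyᗮ :=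
  (mem_Hardy_orthogonal_iff _).2 fun n => by
    rw [fourierCoeff_Jop]
    exact (mem_Hardy_iff f).1 hf _ (by omega)

theorem Jop_mem_Hardy {f : L2} (hf : f ∈ Hardyᗮ) : Jop f ∈ Hardy :=
  (mem_Hardy_iff _).2 fun m hm => by
    obtain ⟨k, hk⟩ : ∃ k : ℕ, (k : ℤ) = -m - 1 := ⟨(-m - 1).toNat, by omega⟩
    rw [fourierCoeff_Jop, ← hk]
    exact (mem_Hardy_orthogonal_iff f).1 hf k

/-- With `g = p + q`, `p ∈ H²`, `q ∈ H²ᗮ`, the decomposition `g = J g = J q + J p` forces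
`J q = p`. -/
theorem starProjection_add_Jop_starProjection {g : L2} (hg : Jop g = g) :
    Hardy.starProjection g + Jop (Hardy.starProjection g) = g := by
  set p := Hardy.starProjection g
  have hp : p ∈ Hardy := Hardy.starProjection_apply_mem g
  have hq : g - p ∈ Hardyᗮ := Submodule.sub_starProjection_mem_orthogonal g
  have hJ : Jop (g - p) - p = (g - p) - Jop p := by
    rw [map_sub, hg]; abel
  have hJq : Jop (g - p) = p := by
    rw [← sub_eq_zero]
    refine (Submodule.orthogonal_disjoint Hardy).le_bot
      ⟨Submodule.sub_mem _ (Jop_mem_Hardy hq) hp, ?_⟩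
    rw [hJ]
    exact Submodule.sub_mem _ hq (Jop_mem_Hardy_orthogonal hp)
  nth_rewrite 1 [← hJq]
  rw [← map_add, sub_add_cancel, hg]

end HardySpace

section ToeplitzPlusHankel

variable {α β : 𝕋 → ℂ}

theorem Mop_apply (φ : 𝕋 → ℂ) (x : Hardy) :
    Mop φ x = Hardy.orthogonalProjectionOnto (Lmul φ (x + Jop x)) := by
  simp only [Mop, Top, Hop, add_apply, ContinuousLinearMap.comp_apply,
    map_add, Submodule.subtypeL_apply]

theorem Mop_comp_Mop (hα : MemLp α ⊤ μ) (hβ : MemLp β ⊤ μ) (hβe : flip β =ᵐ[μ] β) :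
    Mop α ∘L Mop β = Mop (α * β) := by
  ext1 x
  set g := Lmul β (x + Jop x)
  have hJg : Jop g = g := by
    rw [Jop_Lmul hβ, Lmul_congr_ae hβe, map_add, Jop_Jop, add_comm]
  rw [ContinuousLinearMap.comp_apply, Mop_apply α, Mop_apply β, Mop_apply,
    ← Submodule.starProjection_apply, starProjection_add_Jop_starProjection hJg, Lmul_mul hα hβ,
    ContinuousLinearMap.comp_apply]

theorem Mop_zero : Mop 0 = 0 := by
  ext1 x
  rw [Mop_apply, Lmul_zero, zero_apply, map_zero, zero_apply]

theorem Mop_indicator_comp_Mop_indicator {A B : Set 𝕋} (hA : MeasurableSet A)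
    (hB : MeasurableSet B) (hBe : ∀ x, x ∈ B ↔ -x ∈ B) :
    Mop (A.indicator 1) ∘L Mop (B.indicator 1) = Mop ((A ∩ B).indicator 1) := by
  have hflip : flip (B.indicator (1 : 𝕋 → ℂ)) = B.indicator 1 := by
    ext x
    by_cases hx : x ∈ B
    · rw [flip, Set.indicator_of_mem hx, Set.indicator_of_mem ((hBe x).1 hx), Pi.one_apply,
        Pi.one_apply]
    · rw [flip, Set.indicator_of_notMem hx, Set.indicator_of_notMem (mt (hBe x).2 hx)]
  rw [Mop_comp_Mop (memLp_top_indicator_one hA) (memLp_top_indicator_one hB) (.of_eq hflip),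
    Set.inter_indicator_one]

end ToeplitzPlusHankel

section Nonvanishing

variable {φ : 𝕋 → ℂ}

theorem fourierCoeff_fourier_mul (φ : 𝕋 → ℂ) (m n : ℤ) :
    fourierCoeff (fun x => fourier m x * φ x) n = fourierCoeff φ (n - m) := by
  refine integral_congr_ae (.of_forall fun x => ?_)
  simp only [smul_eq_mul]
  rw [← mul_assoc, ← fourier_add, show -n + m = -(n - m) by ring]

theorem fourierCoeff_add_fourierCoeff_succ_of_Mop_eq_zero (hφ : MemLp φ ⊤ μ) (h : Mop φ = 0)
    (n : ℕ) : fourierCoeff φ n + fourierCoeff φ (n + 1) = 0 := by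
  let e₀ : Hardy := ⟨fourierLp 2 ((0 : ℕ) : ℤ), fourierLp_mem_Hardy 0⟩
  have he₀ : (e₀ : L2) =ᵐ[μ] 1 := by
    filter_upwards [coeFn_fourierLp 2 ((0 : ℕ) : ℤ)] with x hx
    exact hx.trans (by rw [Nat.cast_zero, fourier_zero, Pi.one_apply])
  have horth : Lmul φ e₀ + Lmul φ (Jop e₀) ∈ Hardyᗮ := by
    rw [← map_add, ← Submodule.orthogonalProjectionOnto_eq_zero_iff, ← Mop_apply, h, zero_apply]
  have h₁ : Lmul φ e₀ =ᵐ[μ] φ := by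
    filter_upwards [coeFn_Lmul hφ e₀, he₀] with x hx₁ hx₂
    simp [hx₁, hx₂]
  have h₂ : Lmul φ (Jop e₀) =ᵐ[μ] fun x => fourier (-1) x * φ x := by
    filter_upwards [coeFn_Lmul hφ (Jop e₀), coeFn_Jop e₀, ae_eq_comp_neg he₀] with x hx₁ hx₂ hx₃
    simp [hx₁, hx₂, hx₃, mul_comm]
  have hn := (mem_Hardy_orthogonal_iff _).1 horth n
  rwa [← inner_fourierLp, inner_add_right, inner_fourierLp, inner_fourierLp,
    fourierCoeff_congr_ae h₁, fourierCoeff_congr_ae h₂, fourierCoeff_fourier_mul,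
    sub_neg_eq_add] at hn

theorem fourierCoeff_zero_eq_zero_of_Mop_eq_zero (hφ : MemLp φ ⊤ μ) (h : Mop φ = 0) :
    fourierCoeff φ 0 = 0 := by
  have hconst : ∀ n : ℕ, ‖fourierCoeff φ n‖ ^ 2 = ‖fourierCoeff φ 0‖ ^ 2 := by
    intro n
    induction n with
    | zero => rfl
    | succ k ih =>
      rw [Nat.cast_succ, eq_neg_of_add_eq_zero_right
        (fourierCoeff_add_fourierCoeff_succ_of_Mop_eq_zero hφ h k), norm_neg, ih]
  have hφ₂ : MemLp φ 2 μ := hφ.mono_exponent le_top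
  have hsum : Summable fun n : ℕ => ‖fourierCoeff φ n‖ ^ 2 := by
    have := (hasSum_sq_fourierCoeff (hφ₂.toLp φ)).summable.comp_injective Nat.cast_injective
    simpa [Function.comp_def, fourierCoeff_congr_ae hφ₂.coeFn_toLp] using this
  simp_rw [hconst] at hsum
  simpa using (summable_const_iff _).1 hsum

theorem fourierCoeff_indicator_one_zero {K : Set 𝕋} (hK : MeasurableSet K) :
    fourierCoeff (K.indicator (1 : 𝕋 → ℂ)) 0 = (μ K).toReal := by
  simp [fourierCoeff, integral_indicator hK, Measure.real]

theorem Mop_indicator_ne_zero {K : Set 𝕋} (hK : MeasurableSet K) (hpos : 0 < μ K) :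
    Mop (K.indicator 1) ≠ 0 := fun h => by
  have h₀ := fourierCoeff_zero_eq_zero_of_Mop_eq_zero (memLp_top_indicator_one hK) h
  rw [fourierCoeff_indicator_one_zero hK, Complex.ofReal_eq_zero] at h₀
  exact (ENNReal.toReal_pos hpos.ne' (measure_ne_top μ K)).ne' h₀

end Nonvanishing

section EvenSets

open Metric Set

theorem exists_even_split {K : Set 𝕋} (hK : MeasurableSet K) (hpos : 0 < μ K)
    (heven : ∀ x, x ∈ K ↔ -x ∈ K) :
    ∃ A B, A ⊆ K ∧ B ⊆ K ∧ Disjoint A B ∧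
      (MeasurableSet A ∧ 0 < μ A ∧ ∀ x, x ∈ A ↔ -x ∈ A) ∧
      (MeasurableSet B ∧ 0 < μ B ∧ ∀ x, x ∈ B ↔ -x ∈ B) := by
  obtain ⟨r, hA, hB⟩ := AddCircle.exists_volume_inter_closedBall_pos_and_sdiff_pos
    (AddCircle.haarAddCircle_pos_iff.1 hpos)
  have hball : ∀ x : 𝕋, x ∈ closedBall 0 r ↔ -x ∈ closedBall 0 r := by simp
  refine ⟨K ∩ closedBall 0 r, K \ closedBall 0 r, inter_subset_left, sdiff_subset,
    disjoint_sdiff_inter.symm, ⟨hK.inter measurableSet_closedBall,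
      AddCircle.haarAddCircle_pos_iff.2 hA, fun x => (heven x).and (hball x)⟩,
    ⟨hK.diff measurableSet_closedBall, AddCircle.haarAddCircle_pos_iff.2 hB,
      fun x => (heven x).and (hball x).not⟩⟩

end EvenSets

section Rank

variable {ι : Type*} {K : ι → Set 𝕋}

theorem orthogonalIdempotents_Mop_indicator (hm : ∀ i, MeasurableSet (K i))
    (heven : ∀ i, ∀ x, x ∈ K i ↔ -x ∈ K i) (hdisj : Pairwise (Function.onFun Disjoint K)) :
    OrthogonalIdempotents fun i => Mop ((K i).indicator 1) where
  idem i := by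
    rw [IsIdempotentElem, ContinuousLinearMap.mul_def,
      Mop_indicator_comp_Mop_indicator (hm i) (hm i) (heven i), Set.inter_self]
  ortho i j hij := by
    dsimp only
    rw [ContinuousLinearMap.mul_def, Mop_indicator_comp_Mop_indicator (hm i) (hm j) (heven j),
      (hdisj hij).inter_eq, Set.indicator_empty]
    exact Mop_zero

theorem card_le_rank_range_Mop_indicator [Fintype ι] {S : Set 𝕋} (hS : MeasurableSet S)
    (hsub : ∀ i, K i ⊆ S) (hm : ∀ i, MeasurableSet (K i)) (hpos : ∀ i, 0 < μ (K i))
    (heven : ∀ i, ∀ x, x ∈ K i ↔ -x ∈ K i) (hdisj : Pairwise (Function.onFun Disjoint K)) :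
    (Fintype.card ι : Cardinal) ≤
      Module.rank ℂ (LinearMap.range (Mop (S.indicator 1) : Hardy →ₗ[ℂ] Hardy)) := by
  refine ((orthogonalIdempotents_Mop_indicator hm heven hdisj).map
    ContinuousLinearMap.toLinearMapRingHom).card_le_rank_range (fun i => ?_) (fun i => ?_)
  · exact (ContinuousLinearMap.coe_injective.ne (Mop_indicator_ne_zero (hm i) (hpos i))).trans_eq
      ContinuousLinearMap.toLinearMap_zero
  · have h : Mop (S.indicator 1) * Mop ((K i).indicator 1) = Mop ((K i).indicator 1) := by
      rw [ContinuousLinearMap.mul_def, Mop_indicator_comp_Mop_indicator hS (hm i) (heven i),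
        Set.inter_eq_right.2 (hsub i)]
    exact congrArg ContinuousLinearMap.toLinearMapRingHom h

end Rank

/-- For pairwise disjoint even sets `K₁,…,Kₙ` of positive measure, the `M(χ_{K_j})` are nonzero
pairwise "orthogonal" idempotents, `dim im M(χ_{K₁∪⋯∪Kₙ}) ≥ n`; consequently `im M(χ_K)` is
infinite-dimensional for any even `K` of positive measure. -/
theorem stmt_19 (n : ℕ) (K : Fin n → Set 𝕋) (hm : ∀ i, MeasurableSet (K i))
    (hpos : ∀ i, 0 < μ (K i)) (hdisj : Pairwise (Function.onFun Disjoint K))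
    (heven : ∀ i, ∀ x : 𝕋, x ∈ K i ↔ -x ∈ K i) :
    (∀ i, Mop (Set.indicator (K i) (1 : 𝕋 → ℂ)) ∘L Mop (Set.indicator (K i) (1 : 𝕋 → ℂ)) =
        Mop (Set.indicator (K i) (1 : 𝕋 → ℂ))) ∧
    (∀ i, Mop (Set.indicator (K i) (1 : 𝕋 → ℂ)) ≠ 0) ∧
    (∀ i j, i ≠ j → Mop (Set.indicator (K i) (1 : 𝕋 → ℂ)) ∘L
        Mop (Set.indicator (K j) (1 : 𝕋 → ℂ)) = 0) ∧
    (n : Cardinal) ≤ Module.rank ℂ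
        (LinearMap.range (Mop (Set.indicator (⋃ i, K i) (1 : 𝕋 → ℂ)) : Hardy →ₗ[ℂ] Hardy)) ∧
    (∀ K' : Set 𝕋, MeasurableSet K' → 0 < μ K' → (∀ x : 𝕋, x ∈ K' ↔ -x ∈ K') →
      ¬ FiniteDimensional ℂ
        (LinearMap.range (Mop (Set.indicator K' (1 : 𝕋 → ℂ)) : Hardy →ₗ[ℂ] Hardy))) := by
  have hK := orthogonalIdempotents_Mop_indicator hm heven hdisj
  refine ⟨fun i => (hK.idem i).eq, fun i => Mop_indicator_ne_zero (hm i) (hpos i),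
    fun i j hij => hK.ortho hij, ?_, fun K' hK' hpos' heven' hfin => ?_⟩
  · simpa using card_le_rank_range_Mop_indicator (.iUnion hm) (Set.subset_iUnion K) hm hpos
      heven hdisj
  obtain ⟨A, hA, hAdisj⟩ := exists_pairwise_disjoint_seq_of_forall_split
    (p := fun s => MeasurableSet s ∧ 0 < μ s ∧ ∀ x, x ∈ s ↔ -x ∈ s)
    (fun s ⟨hs, hspos, hseven⟩ => exists_even_split hs hspos hseven) ⟨hK', hpos', heven'⟩
  have hrank : ∀ N : ℕ, (N : Cardinal) ≤
      Module.rank ℂ (LinearMap.range (Mop (K'.indicator 1) : Hardy →ₗ[ℂ] Hardy)) := fun N => by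
    simpa using card_le_rank_range_Mop_indicator (K := fun i : Fin N => A i) hK'
      (fun i => (hA i).2) (fun i => (hA i).1.1) (fun i => (hA i).1.2.1) (fun i => (hA i).1.2.2)
      (hAdisj.comp_of_injective Fin.val_injective)
  exact (Module.rank_lt_aleph0 ℂ _).not_ge (Cardinal.aleph0_le.2 hrank)

end TH
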